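/- arXiv:2108.12986 — 2 statements merged into one kernel-verified Lean document; each statement's English description precedes it below -/
import Mathlib

section
/- Let X be a one-sided shift space and T_X its hom tree-shift. If T_X is topologically mixing (TM), then X is topologically mixing. -/
namespace TreeShiftPaper

/-- Words over the alphabet `Σ = {0, …, k-1}`: nodes of the `k`-tree. -/
abbrev Word (k : ℕ) := List (Fin k)

variable {k : ℕ} {A : Type*}

/-- A set of words is prefix-closed if it contains every prefix of each of its elements. -/
def PrefixClosed (S : Set (Word k)) : Prop :=
  ∀ w ∈ S, ∀ v : Word k, v <+: w → v ∈ S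

/-- The pattern with support `S` and labels `u` appears in the labeled tree `t`. -/
def PatternAppears (t : Word k → A) (S : Set (Word k)) (u : Word k → A) : Prop :=
  ∃ s : Word k, ∀ w ∈ S, t (s ++ w) = u w

/-- The set of labeled trees avoiding every pattern of the forbidden family `F`. -/
def treeShiftOf (F : Set ((Set (Word k)) × (Word k → A))) : Set (Word k → A) :=
  {t | ∀ p ∈ F, ¬ PatternAppears t p.1 p.2}

/-- `T` is a tree-shift: it is defined by some forbidden set of patterns
(each with finite prefix-closed support). -/
def IsTreeShift (T : Set (Word k → A)) : Prop :=
  ∃ F : Set ((Set (Word k)) × (Word k → A)),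
    (∀ p ∈ F, p.1.Finite ∧ PrefixClosed p.1) ∧ T = treeShiftOf F

/-- `T` is a tree-shift of finite type: the forbidden set can be chosen finite. -/
def IsTreeSFT (T : Set (Word k → A)) : Prop :=
  ∃ F : Set ((Set (Word k)) × (Word k → A)),
    F.Finite ∧ (∀ p ∈ F, p.1.Finite ∧ PrefixClosed p.1) ∧ T = treeShiftOf F

/-- The finite word `w` occurs in the one-sided sequence `x` at position `i`. -/
def OccursAt (x : ℕ → A) (i : ℕ) (w : List A) : Prop :=
  ∀ j : Fin w.length, x (i + (j : ℕ)) = w.get j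

/-- The one-sided shift space defined by the forbidden set of words `F`. -/
def shiftOf (F : Set (List A)) : Set (ℕ → A) :=
  {x | ∀ w ∈ F, ∀ i : ℕ, ¬ OccursAt x i w}

/-- `X` is a one-sided shift space. -/
def IsShift (X : Set (ℕ → A)) : Prop := ∃ F : Set (List A), X = shiftOf F

/-- `X` is a one-sided shift of finite type. -/
def IsSFT (X : Set (ℕ → A)) : Prop :=
  ∃ F : Set (List A), F.Finite ∧ X = shiftOf F

/-- A chain: an infinite path in the tree starting at the root. -/
def IsChain (c : ℕ → Word k) : Prop :=
  c 0 = [] ∧ ∀ n : ℕ, ∃ i : Fin k, c (n + 1) = c n ++ [i]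

/-- The hom tree-shift associated with a one-sided shift space `X`: labeled trees whose
projection along every chain lies in `X`. -/
def homTree (k : ℕ) (X : Set (ℕ → A)) : Set (Word k → A) :=
  {t | ∀ c : ℕ → Word k, IsChain c → (fun n => t (c n)) ∈ X}

/-- `Y` is a sofic one-sided shift: image of an SFT under a sliding block code induced
by an `n`-block map. -/
def IsSofic (Y : Set (ℕ → A)) : Prop :=
  ∃ (B : Type) (_ : Fintype B) (X : Set (ℕ → B)) (n : ℕ) (f : (ℕ → B) → A),
    IsSFT X ∧ (∀ u v : ℕ → B, (∀ j < n, u j = v j) → f u = f v) ∧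
    (fun x : ℕ → B => fun i => f (fun j => x (i + j))) '' X = Y

/-- `T` is a sofic tree-shift: image of a tree-SFT under the map induced by an
`n`-block map. -/
def IsSoficTree (T : Set (Word k → A)) : Prop :=
  ∃ (B : Type) (_ : Fintype B) (T' : Set (Word k → B)) (n : ℕ) (g : (Word k → B) → A),
    IsTreeSFT T' ∧
    (∀ u v : Word k → B, (∀ w : Word k, w.length ≤ n → u w = v w) → g u = g v) ∧
    (fun t : Word k → B => fun w => g (fun z => t (w ++ z))) '' T' = T

/-- The Markov tree-shift determined by `k` binary `d × d` transition matrices. -/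
def markovTree (k d : ℕ) (M : Fin k → Matrix (Fin d) (Fin d) Bool) :
    Set (Word k → Fin d) :=
  {t | ∀ w : Word k, ∀ i : Fin k, M i (t w) (t (w ++ [i])) = true}

/-- The one-sided Markov (vertex) shift determined by a binary `d × d` matrix. -/
def markovShift (d : ℕ) (M : Matrix (Fin d) (Fin d) Bool) : Set (ℕ → Fin d) :=
  {x | ∀ i : ℕ, M (x i) (x (i + 1)) = true}

/-- The pattern with support `S` and labels `u` is admissible in `T`. -/
def AdmissiblePattern (T : Set (Word k → A)) (S : Set (Word k)) (u : Word k → A) : Prop :=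
  ∃ t ∈ T, ∃ s : Word k, ∀ w ∈ S, t (s ++ w) = u w

/-- The `n`-block `u` (a labeling of `Δ_n`) is admissible in `T`. -/
def AdmissibleBlock (T : Set (Word k → A)) (n : ℕ) (u : Word k → A) : Prop :=
  ∃ t ∈ T, ∃ s : Word k, ∀ w : Word k, w.length ≤ n → t (s ++ w) = u w

/-- Word distance on the `k`-tree:
`d(x,y) = |x| + |y| - 2 · max{|w| : w` a common prefix of `x` and `y}`. -/
noncomputable def wordDist (x y : Word k) : ℕ :=
  x.length + y.length - 2 * sSup {m : ℕ | ∃ w : Word k, w <+: x ∧ w <+: y ∧ w.length = m}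

/-- The boundary `∂S = {w ∈ S : wΣ ∩ S = ∅}` of a support `S`. -/
def boundary (S : Set (Word k)) : Set (Word k) :=
  {w | w ∈ S ∧ ∀ i : Fin k, w ++ [i] ∉ S}

/-- A complete prefix code: a finite prefix set such that every word of length at least
`max_{z ∈ P} |z|` has a prefix in `P`. -/
def IsCPC (P : Set (Word k)) : Prop :=
  P.Finite ∧ (∀ x ∈ P, ∀ y ∈ P, x <+: y → x = y) ∧
  ∀ w : Word k, (∀ z ∈ P, z.length ≤ w.length) → ∃ x ∈ P, x <+: w

/-- Strong irreducibility with gap `N`. -/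
def SIGap (T : Set (Word k → A)) (N : ℕ) : Prop :=
  ∀ (Su Sv : Set (Word k)) (u v : Word k → A),
    Su.Finite → PrefixClosed Su → Sv.Finite → PrefixClosed Sv →
    AdmissiblePattern T Su u → AdmissiblePattern T Sv v →
    ∀ w : Word k, (∀ h ∈ Su, N ≤ wordDist w h) →
      ∃ t ∈ T, (∀ z ∈ Su, t z = u z) ∧ ∀ z ∈ Sv, t (w ++ z) = v z

/-- `T` is strongly irreducible (SI). -/
def SI (T : Set (Word k → A)) : Prop := ∃ N : ℕ, SIGap T N

/-- `T` is block gluing (BG). -/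
def BG (T : Set (Word k → A)) : Prop :=
  ∃ N : ℕ, ∀ (n m : ℕ) (u v : Word k → A),
    AdmissibleBlock T n u → AdmissibleBlock T m v →
    ∀ w : Word k, N + n ≤ w.length →
      ∃ t ∈ T, (∀ z : Word k, z.length ≤ n → t z = u z) ∧
        ∀ z : Word k, z.length ≤ m → t (w ++ z) = v z

/-- `T` is topologically mixing (TM). -/
def TM (T : Set (Word k → A)) : Prop :=
  ∀ H₁ H₂ : Set (Word k), H₁.Finite → H₂.Finite →
    ∃ N : ℕ, ∀ t₁ ∈ T, ∀ t₂ ∈ T, ∀ w : Word k, (∀ h ∈ H₁, N ≤ wordDist w h) →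
      ∃ t ∈ T, (∀ z ∈ H₁, t z = t₁ z) ∧ ∀ z ∈ H₂, t (w ++ z) = t₂ z

/-- `T` is irreducible (IR). -/
def IR (T : Set (Word k → A)) : Prop :=
  ∀ (n m : ℕ) (u v : Word k → A),
    AdmissibleBlock T n u → AdmissibleBlock T m v →
    ∃ w : Word k, n < w.length ∧
      ∃ t ∈ T, (∀ z : Word k, z.length ≤ n → t z = u z) ∧
        ∀ z : Word k, z.length ≤ m → t (w ++ z) = v z

/-- `T` is CPC-strongly irreducible via the prefix set `P`. -/
def CPCSIWith (T : Set (Word k → A)) (P : Set (Word k)) : Prop :=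
  ∀ (Su Sv : Set (Word k)) (u v : Word k → A),
    Su.Finite → PrefixClosed Su → Sv.Finite → PrefixClosed Sv →
    AdmissiblePattern T Su u → AdmissiblePattern T Sv v →
    ∃ t ∈ T, (∀ z ∈ Su, t z = u z) ∧
      ∀ w ∈ boundary Su, ∀ z ∈ P, ∀ y ∈ Sv, t (w ++ z ++ y) = v y

/-- `T` is CPC-strongly irreducible (CPC SI). -/
def CPCSI (T : Set (Word k → A)) : Prop := ∃ P : Set (Word k), IsCPC P ∧ CPCSIWith T P

/-- `T` is uniform CPC-strongly irreducible (CPC USI): CPC SI with `P = Σ^N`. -/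
def CPCUSI (T : Set (Word k → A)) : Prop :=
  ∃ N : ℕ, CPCSIWith T {z : Word k | z.length = N}

/-- `T` is CPC-block gluing via the prefix set `P`. -/
def CPCBGWith (T : Set (Word k → A)) (P : Set (Word k)) : Prop :=
  ∀ (n m : ℕ) (u v : Word k → A),
    AdmissibleBlock T n u → AdmissibleBlock T m v →
    ∃ t ∈ T, (∀ z : Word k, z.length ≤ n → t z = u z) ∧
      ∀ w : Word k, w.length = n → ∀ z ∈ P, ∀ y : Word k, y.length ≤ m →
        t (w ++ z ++ y) = v y

/-- `T` is CPC-block gluing (CPC BG). -/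
def CPCBG (T : Set (Word k → A)) : Prop := ∃ P : Set (Word k), IsCPC P ∧ CPCBGWith T P

/-- `T` is uniform CPC-block gluing (CPC UBG): CPC BG with `P = Σ^N`. -/
def CPCUBG (T : Set (Word k → A)) : Prop :=
  ∃ N : ℕ, CPCBGWith T {z : Word k | z.length = N}

/-- `T` is CPC-irreducible (CPC IR). -/
def CPCIR (T : Set (Word k → A)) : Prop :=
  ∀ (n m : ℕ) (u v : Word k → A),
    AdmissibleBlock T n u → AdmissibleBlock T m v →
    ∃ P : Set (Word k), IsCPC P ∧ (∀ z ∈ P, n + 1 ≤ z.length) ∧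
      ∃ t ∈ T, (∀ z : Word k, z.length ≤ n → t z = u z) ∧
        ∀ w ∈ P, ∀ y : Word k, y.length ≤ m → t (w ++ y) = v y

/-- The finite word `u` is admissible in the one-sided shift space `X`. -/
def WordAdmissible (X : Set (ℕ → A)) (u : List A) : Prop :=
  ∃ x ∈ X, ∃ i : ℕ, OccursAt x i u

/-- The one-sided shift space `X` is topologically mixing. -/
def MixingShift (X : Set (ℕ → A)) : Prop :=
  ∀ u v : List A, WordAdmissible X u → WordAdmissible X v →
    ∃ N : ℕ, ∀ n ≥ N, ∃ x ∈ X, OccursAt x 0 u ∧ OccursAt x (u.length + n) v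

/-- The one-sided shift space `X` is transitive (irreducible). -/
def TransitiveShift (X : Set (ℕ → A)) : Prop :=
  ∀ u v : List A, WordAdmissible X u → WordAdmissible X v →
    ∃ x ∈ X, ∃ n : ℕ, u.length ≤ n ∧ OccursAt x 0 u ∧ OccursAt x n v

end TreeShiftPaper

/-!
A path `x ∈ X` is turned into the tree that carries `x n` on every node of level `n`; since
every chain visits exactly one node per level, such a tree lies in `T_X`. Mixing of `T_X`
glues the level tree of an occurrence of `u` at the root to the level tree of an occurrence of
`v` at a node `w` on the chain `0^∞`, and `d(w, H₁) ≥ |w| - |u|`, so every `|w| ≥ |u| + N`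
works. Reading the glued tree along `0^∞` gives the mixing sequence in `X`.
-/

namespace TreeShiftPaper

section

variable {k : ℕ} {A : Type*}

theorem IsShift.shift_mem {X : Set (ℕ → A)} (hX : IsShift X) {x : ℕ → A} (hx : x ∈ X)
    (m : ℕ) : (fun n => x (m + n)) ∈ X := by
  obtain ⟨F, rfl⟩ := hX
  intro w hw i hocc
  exact hx w hw (m + i) fun j => by simpa [Nat.add_assoc] using hocc j

theorem WordAdmissible.exists_occursAt_zero {X : Set (ℕ → A)} (hX : IsShift X) {u : List A}
    (hu : WordAdmissible X u) : ∃ x ∈ X, OccursAt x 0 u := by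
  obtain ⟨x, hx, i, hocc⟩ := hu
  exact ⟨_, hX.shift_mem hx i, fun j => by simpa using hocc j⟩

theorem IsChain.length_eq {c : ℕ → Word k} (hc : IsChain c) (n : ℕ) : (c n).length = n := by
  induction n with
  | zero => simp [hc.1]
  | succ n ih =>
    obtain ⟨i, hi⟩ := hc.2 n
    simp [hi, ih]

theorem isChain_replicate (a : Fin k) : IsChain fun n => List.replicate n a :=
  ⟨rfl, fun _ => ⟨a, List.replicate_succ'⟩⟩

def levelTree (x : ℕ → A) : Word k → A := fun w => x w.length

theorem levelTree_mem_homTree {X : Set (ℕ → A)} {x : ℕ → A} (hx : x ∈ X) :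
    levelTree x ∈ homTree k X := by
  intro c hc
  simpa only [levelTree, hc.length_eq] using hx

theorem length_sub_length_le_wordDist (x y : Word k) : x.length - y.length ≤ wordDist x y := by
  have hsup : sSup {m : ℕ | ∃ w : Word k, w <+: x ∧ w <+: y ∧ w.length = m} ≤ y.length :=
    csSup_le ⟨0, [], List.nil_prefix, List.nil_prefix, rfl⟩
      fun _ ⟨_, _, hwy, hm⟩ => hm ▸ hwy.length_le
  unfold wordDist
  omega

end

theorem stmt13_general {k : ℕ} (hk : 2 ≤ k) {A : Type*} (X : Set (ℕ → A))
    (hX : IsShift X) (h : TM (homTree k X)) : MixingShift X := by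
  intro u v hu hv
  obtain ⟨x₁, hx₁, hocc₁⟩ := hu.exists_occursAt_zero hX
  obtain ⟨x₂, hx₂, hocc₂⟩ := hv.exists_occursAt_zero hX
  obtain ⟨N, hN⟩ := h {z | z.length ≤ u.length} {z | z.length ≤ v.length}
    (List.finite_length_le _ _) (List.finite_length_le _ _)
  refine ⟨N, fun n hn => ?_⟩
  let a : Fin k := ⟨0, by omega⟩
  have hfar : ∀ z ∈ {z : Word k | z.length ≤ u.length},
      N ≤ wordDist (List.replicate (u.length + n) a) z := fun z (hz : z.length ≤ u.length) =>
    (show N ≤ u.length + n - z.length by omega).trans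
      (by simpa using length_sub_length_le_wordDist (List.replicate (u.length + n) a) z)
  obtain ⟨t, ht, htu, htv⟩ := hN _ (levelTree_mem_homTree hx₁) _ (levelTree_mem_homTree hx₂)
    _ hfar
  refine ⟨fun m => t (List.replicate m a), ht _ (isChain_replicate a), fun j => ?_, fun j => ?_⟩
  · show t _ = _
    rw [htu _ (by simp [j.is_lt.le]), levelTree, List.length_replicate]
    simpa using hocc₁ j
  · show t _ = _
    rw [List.replicate_add, htv _ (by simp [j.is_lt.le]), levelTree, List.length_replicate]
    simpa using hocc₂ j

/-- If the hom tree-shift `T_X` is topologically mixing then `X` is topologically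
mixing. -/
theorem stmt13 {k : ℕ} (hk : 2 ≤ k) {A : Type*} [Fintype A] (X : Set (ℕ → A))
    (hX : IsShift X) (h : TM (homTree k X)) : MixingShift X :=
  stmt13_general hk X hX h

end TreeShiftPaper
end

section
/- Let k = 2 and let T ⊆ {0,1}^{Σ*} be the tree-shift defined by the forbidden set of 1-blocks {(1;1,1), (0;1,1)}, i.e. the set of binary labeled trees in which no node has both children labeled 1. Then T is strongly irreducible (SI) with gap N = 2, but T is not CPC-block gluing (CPC BG). -/
namespace TreeShiftPaper

/-- The tree-shift (`k = 2`) of binary labeled trees in which no node has both children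
labeled `1`, i.e. with forbidden 1-blocks `(1;1,1)` and `(0;1,1)`. -/
def noTwinOnesTree : Set (Word 2 → Fin 2) :=
  {t | ∀ w : Word 2, ¬ (t (w ++ [0]) = 1 ∧ t (w ++ [1]) = 1)}

/-! For SI, glue `u` on `Su` with `v` on `w·Sv` and label everything else `0`. The gap `2`
forces `w ∉ Su` and, for `w` a child of `p`, `p ∉ Su`; by prefix-closedness no node of
`w·Σ*` and no sibling of such a node lies in `Su`, so the only sibling pairs labeled `1, 1`
would lie entirely inside `Su` or inside `w·Sv`, which admissibility rules out.

For the failure of CPC BG, glue the all-`0` block with the `0`-block `1` at every node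
`w z` (`|w| = n`, `z ∈ P`). If `ε ∈ P`, take `n = 1`: both children of the root become `1`.
Otherwise the parent of a longest word of `P` has both children in `P`; take `n = 0`. -/

section General

variable {k : ℕ} {A : Type*}

lemma wordDist_le_of_prefix {x y c : Word k} (hx : c <+: x) (hy : c <+: y) :
    wordDist x y ≤ x.length + y.length - 2 * c.length := by
  have hbdd : BddAbove {m : ℕ | ∃ w : Word k, w <+: x ∧ w <+: y ∧ w.length = m} :=
    ⟨x.length, by rintro m ⟨w, hw, -, rfl⟩; exact hw.length_le⟩
  exact Nat.sub_le_sub_left (Nat.mul_le_mul_left 2 (le_csSup hbdd ⟨c, hx, hy, rfl⟩)) _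

section Gap

variable {S : Set (Word k)} {w : Word k}

lemma notMem_of_prefix_of_two_le_wordDist (hS : PrefixClosed S)
    (hw : ∀ h ∈ S, 2 ≤ wordDist w h) {x : Word k} (hx : w <+: x) : x ∉ S := by
  intro hxS
  have := hw w (hS x hxS w hx)
  have := wordDist_le_of_prefix (List.prefix_refl w) (List.prefix_refl w)
  omega

lemma parent_notMem_of_two_le_wordDist (hw : ∀ h ∈ S, 2 ≤ wordDist w h) {p : Word k}
    {i : Fin k} (hpi : w = p ++ [i]) : p ∉ S := by
  intro hp
  have := hw p hp
  have := wordDist_le_of_prefix (hpi ▸ List.prefix_append p [i]) (List.prefix_refl p)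
  simp only [hpi, List.length_append, List.length_singleton] at *
  omega

lemma sibling_notMem_of_two_le_wordDist (hS : PrefixClosed S)
    (hw : ∀ h ∈ S, 2 ≤ wordDist w h) {p : Word k} {i j : Fin k} (hpj : w <+: p ++ [j]) :
    p ++ [i] ∉ S := by
  intro hpi
  rcases List.prefix_concat_iff.mp hpj with hwp | hwp
  · exact parent_notMem_of_two_le_wordDist hw hwp (hS _ hpi p (List.prefix_append p [i]))
  · exact notMem_of_prefix_of_two_le_wordDist hS hw (hwp.trans (List.prefix_append p [i])) hpi

end Gap

lemma prefix_of_prefix_concat_of_ne {w p : Word k} {i j : Fin k} (hij : i ≠ j)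
    (hi : w <+: p ++ [i]) (hj : w <+: p ++ [j]) : w <+: p := by
  rcases List.prefix_concat_iff.mp hi with rfl | hwp
  · rcases List.prefix_concat_iff.mp hj with h | h
    · exact absurd (List.append_cancel_left h) (by simpa using hij)
    · simpa using h.length_le
  · exact hwp

open Classical in
noncomputable def graft (Su : Set (Word k)) (u : Word k → A) (w : Word k)
    (Sv : Set (Word k)) (v : Word k → A) (b : A) : Word k → A :=
  fun x => if x ∈ Su then u x
    else if w <+: x ∧ x.drop w.length ∈ Sv then v (x.drop w.length) else b

section Graft

variable {Su Sv : Set (Word k)} {u v : Word k → A} {w : Word k} {b : A}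

lemma graft_of_mem {x : Word k} (hx : x ∈ Su) : graft Su u w Sv v b x = u x := by
  simp [graft, hx]

lemma graft_append {z : Word k} (hwz : w ++ z ∉ Su) (hz : z ∈ Sv) :
    graft Su u w Sv v b (w ++ z) = v z := by
  simp [graft, hwz, hz]

lemma graft_eq_of_ne {x : Word k} {a : A} (hx : graft Su u w Sv v b x = a) (ha : a ≠ b) :
    (x ∈ Su ∧ u x = a) ∨ ∃ y ∈ Sv, w ++ y = x ∧ v y = a := by
  by_cases hxS : x ∈ Su
  · exact Or.inl ⟨hxS, by simpa [graft, hxS] using hx⟩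
  by_cases hy : w <+: x ∧ x.drop w.length ∈ Sv
  · refine Or.inr ⟨_, hy.2, ?_, by simpa [graft, hxS, hy] using hx⟩
    obtain ⟨y, rfl⟩ := hy.1
    simp
  · exact absurd (by simpa [graft, hxS, hy] using hx.symm) ha

end Graft

end General

lemma IsCPC.nonempty {k : ℕ} {P : Set (Word k)} (hP : IsCPC P) : P.Nonempty := by
  rcases P.eq_empty_or_nonempty with rfl | hne
  · obtain ⟨x, hx, -⟩ := hP.2.2 [] (by simp)
    exact absurd hx (Set.notMem_empty x)
  · exact hne

lemma IsCPC.exists_children_mem {k : ℕ} {P : Set (Word k)} (hP : IsCPC P)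
    (hnil : ([] : Word k) ∉ P) : ∃ q : Word k, ∀ i : Fin k, q ++ [i] ∈ P := by
  obtain ⟨z, hzP, hzmax⟩ := P.exists_max_image List.length hP.1 hP.nonempty
  obtain ⟨-, hpre, hcomp⟩ := hP
  obtain ⟨q, a, rfl⟩ := (List.eq_nil_or_concat' z).resolve_left (by rintro rfl; exact hnil hzP)
  refine ⟨q, fun i => ?_⟩
  obtain ⟨x, hxP, hx⟩ := hcomp (q ++ [i]) (by simpa using hzmax)
  rcases List.prefix_concat_iff.mp hx with rfl | hxq
  · exact hxP
  · have := hpre x hxP _ hzP (hxq.trans (List.prefix_append q [a]))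
    have := hxq.length_le
    simp_all

lemma AdmissiblePattern.not_twin_ones {S : Set (Word 2)} {u : Word 2 → Fin 2}
    (hu : AdmissiblePattern noTwinOnesTree S u) {q : Word 2} (h0 : q ++ [0] ∈ S)
    (h1 : q ++ [1] ∈ S) : ¬ (u (q ++ [0]) = 1 ∧ u (q ++ [1]) = 1) := by
  obtain ⟨t, ht, s, hs⟩ := hu
  rw [← hs _ h0, ← hs _ h1]
  simpa only [List.append_assoc] using ht (s ++ q)

lemma graft_mem_noTwinOnesTree {Su Sv : Set (Word 2)} {u v : Word 2 → Fin 2} {w : Word 2}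
    (hSu : PrefixClosed Su) (hu : AdmissiblePattern noTwinOnesTree Su u)
    (hv : AdmissiblePattern noTwinOnesTree Sv v) (hw : ∀ h ∈ Su, 2 ≤ wordDist w h) :
    graft Su u w Sv v 0 ∈ noTwinOnesTree := by
  rintro p ⟨h0, h1⟩
  rcases graft_eq_of_ne h0 one_ne_zero with ⟨hp0, h0⟩ | ⟨y0, hy0, hwy0, h0⟩ <;>
    rcases graft_eq_of_ne h1 one_ne_zero with ⟨hp1, h1⟩ | ⟨y1, hy1, hwy1, h1⟩
  · exact hu.not_twin_ones hp0 hp1 ⟨h0, h1⟩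
  · exact sibling_notMem_of_two_le_wordDist hSu hw (hwy1 ▸ List.prefix_append w y1) hp0
  · exact sibling_notMem_of_two_le_wordDist hSu hw (hwy0 ▸ List.prefix_append w y0) hp1
  · obtain ⟨q, rfl⟩ := prefix_of_prefix_concat_of_ne Fin.zero_ne_one
      (hwy0 ▸ List.prefix_append w y0) (hwy1 ▸ List.prefix_append w y1)
    simp only [List.append_assoc] at hwy0 hwy1
    obtain rfl := List.append_cancel_left hwy0
    obtain rfl := List.append_cancel_left hwy1
    exact hv.not_twin_ones hy0 hy1 ⟨h0, h1⟩

theorem noTwinOnesTree_siGap_two : SIGap noTwinOnesTree 2 :=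
  fun Su _ _ _ _ hSu _ _ hu hv w hw =>
    ⟨graft Su _ w _ _ 0, graft_mem_noTwinOnesTree hSu hu hv hw, fun _ hz => graft_of_mem hz,
      fun _ hz => graft_append
        (notMem_of_prefix_of_two_le_wordDist hSu hw (List.prefix_append _ _)) hz⟩

lemma admissibleBlock_zero (n : ℕ) : AdmissibleBlock noTwinOnesTree n (fun _ => 0) :=
  ⟨fun _ => 0, fun _ h => zero_ne_one h.1, [], fun _ _ => rfl⟩

lemma admissibleBlock_root_one : AdmissibleBlock noTwinOnesTree 0 (fun _ => 1) := by
  classical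
  refine ⟨fun x => if x = [] then 1 else 0, fun _ h => ?_, [], fun y hy => ?_⟩
  · simp at h
  · simp [List.length_eq_zero_iff.mp (Nat.le_zero.mp hy)]

theorem not_CPCBG_noTwinOnesTree : ¬ CPCBG noTwinOnesTree := by
  rintro ⟨P, hP, hglue⟩
  obtain ⟨n, q, hq⟩ : ∃ (n : ℕ) (q : Word 2), ∀ i : Fin 2,
      ∃ w z, w.length = n ∧ z ∈ P ∧ w ++ z = q ++ [i] := by
    by_cases hnil : [] ∈ P
    · exact ⟨1, [], fun i => ⟨[i], [], rfl, hnil, rfl⟩⟩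
    · obtain ⟨q, hq⟩ := hP.exists_children_mem hnil
      exact ⟨0, q, fun i => ⟨[], q ++ [i], rfl, hq i, rfl⟩⟩
  obtain ⟨t, ht, -, hv⟩ :=
    hglue n 0 (fun _ => 0) (fun _ => 1) (admissibleBlock_zero n) admissibleBlock_root_one
  have hone (i : Fin 2) : t (q ++ [i]) = 1 := by
    obtain ⟨w, z, hw, hz, hwz⟩ := hq i
    simpa [hwz] using hv w hw z hz [] le_rfl
  exact ht q ⟨hone 0, hone 1⟩

/-- `noTwinOnesTree` is strongly irreducible with gap `N = 2`, but is not CPC-block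
gluing. -/
theorem stmt18 : SIGap noTwinOnesTree 2 ∧ ¬ CPCBG noTwinOnesTree :=
  ⟨noTwinOnesTree_siGap_two, not_CPCBG_noTwinOnesTree⟩

end TreeShiftPaper
end
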